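/- arXiv:2408.14745 — 2 statements merged into one kernel-verified Lean document; each statement's English description precedes it below -/
import Mathlib

section
/- Discrete Gronwall inequality: Let τ, B ≥ 0 and let (a_k), (b_k), (c_k), (γ_k) be sequences of nonnegative reals such that for all n ≥ 0, a_n + τ ∑_{k=0}^n b_k ≤ τ ∑_{k=0}^n γ_k a_k + τ ∑_{k=0}^n c_k + B. Suppose τ γ_k < 1 for all k and set σ_k = (1 − τ γ_k)^{-1}. Then for all n ≥ 0, a_n + τ ∑_{k=0}^n b_k ≤ exp(τ ∑_{k=0}^n γ_k σ_k) · (τ ∑_{k=0}^n c_k + B). -/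
/-!
Write `F n = τ ∑_{k<n} γ_k a_k + τ ∑_{k<n} c_k + B` for the right-hand side of the hypothesis.
Since `F (n+1) = F n + τ c_n + τ γ_n a_n` and `a_n ≤ F (n+1)`, the term `τ γ_n a_n` can be absorbed
into the left-hand side: `a_n ≤ σ_n (F n + τ c_n)`, hence `F (n+1) ≤ (1 + τ γ_n σ_n) (F n + τ c_n)`.
Iterating this implicit recursion bounds `F (n+1)` by `∏_{k≤n} (1 + τ γ_k σ_k) (B + τ ∑_{k≤n} c_k)`,
and `1 + x ≤ exp x` turns the product into the exponential.
-/

open Finset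

namespace Heywood

theorem add_mul_le_one_add_mul_inv_mul {t a y : ℝ} (ht₀ : 0 ≤ t) (ht₁ : t < 1)
    (h : a ≤ y + t * a) : y + t * a ≤ (1 + t * (1 - t)⁻¹) * y := by
  have ha : a ≤ (1 - t)⁻¹ * y := (le_inv_mul_iff₀ (by linarith)).2 (by linarith)
  calc y + t * a ≤ y + t * ((1 - t)⁻¹ * y) := by gcongr
    _ = (1 + t * (1 - t)⁻¹) * y := by ring

theorem le_prod_one_add_mul_add_sum_of_le_one_add_mul {u g d : ℕ → ℝ} (hg : ∀ n, 0 ≤ g n)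
    (hd : ∀ n, 0 ≤ d n) (hu : ∀ n, u (n + 1) ≤ (1 + g n) * (u n + d n)) (n : ℕ) :
    u n ≤ (∏ k ∈ range n, (1 + g k)) * (u 0 + ∑ k ∈ range n, d k) := by
  induction n with
  | zero => simp
  | succ n ih =>
    have hprod : 1 ≤ ∏ k ∈ range n, (1 + g k) :=
      one_le_prod fun k _ => le_add_of_nonneg_right (hg k)
    have hdn : d n ≤ (∏ k ∈ range n, (1 + g k)) * d n := le_mul_of_one_le_left (hd n) hprod
    calc u (n + 1) ≤ (1 + g n) * (u n + d n) := hu n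
      _ ≤ (1 + g n) * ((∏ k ∈ range n, (1 + g k)) * (u 0 + ∑ k ∈ range n, d k) +
            (∏ k ∈ range n, (1 + g k)) * d n) := by
        gcongr
        linarith [hg n]
      _ = (∏ k ∈ range (n + 1), (1 + g k)) * (u 0 + ∑ k ∈ range (n + 1), d k) := by
        rw [prod_range_succ, sum_range_succ]
        ring

theorem le_exp_sum_mul_add_sum_of_le_one_add_mul {u g d : ℕ → ℝ} (hg : ∀ n, 0 ≤ g n)
    (hd : ∀ n, 0 ≤ d n) (hu₀ : 0 ≤ u 0) (hu : ∀ n, u (n + 1) ≤ (1 + g n) * (u n + d n))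
    (n : ℕ) : u n ≤ Real.exp (∑ k ∈ range n, g k) * (u 0 + ∑ k ∈ range n, d k) :=
  (le_prod_one_add_mul_add_sum_of_le_one_add_mul hg hd hu n).trans <| by
    gcongr
    · exact add_nonneg hu₀ (sum_nonneg fun k _ => hd k)
    · exact Real.prod_one_add_le_exp_sum _ hg

theorem discrete_gronwall_general (τ B : ℝ) (a b c γ : ℕ → ℝ)
    (hτ : 0 ≤ τ) (hB : 0 ≤ B)
    (hb : ∀ k, 0 ≤ b k) (hc : ∀ k, 0 ≤ c k) (hγ : ∀ k, 0 ≤ γ k)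
    (hγτ : ∀ k, τ * γ k < 1)
    (hrec : ∀ n : ℕ, a n + τ * ∑ k ∈ range (n + 1), b k ≤
      τ * ∑ k ∈ range (n + 1), γ k * a k + τ * ∑ k ∈ range (n + 1), c k + B) :
    ∀ n : ℕ, a n + τ * ∑ k ∈ range (n + 1), b k ≤
      Real.exp (τ * ∑ k ∈ range (n + 1), γ k * (1 - τ * γ k)⁻¹) *
        (τ * ∑ k ∈ range (n + 1), c k + B) := by
  set F : ℕ → ℝ := fun m => τ * ∑ k ∈ range m, γ k * a k + τ * ∑ k ∈ range m, c k + B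
  have hsplit (m : ℕ) : F (m + 1) = F m + τ * c m + τ * γ m * a m := by
    simp only [F, sum_range_succ]
    ring
  have hstep (m : ℕ) : F (m + 1) ≤ (1 + τ * γ m * (1 - τ * γ m)⁻¹) * (F m + τ * c m) := by
    rw [hsplit]
    refine add_mul_le_one_add_mul_inv_mul (mul_nonneg hτ (hγ m)) (hγτ m) ?_
    have hbsum : 0 ≤ τ * ∑ k ∈ range (m + 1), b k := mul_nonneg hτ (sum_nonneg fun k _ => hb k)
    linarith [hrec m, hsplit m]
  intro n
  calc a n + τ * ∑ k ∈ range (n + 1), b k ≤ F (n + 1) := hrec n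
    _ ≤ Real.exp (∑ k ∈ range (n + 1), τ * γ k * (1 - τ * γ k)⁻¹) *
          (F 0 + ∑ k ∈ range (n + 1), τ * c k) :=
      le_exp_sum_mul_add_sum_of_le_one_add_mul
        (fun k => mul_nonneg (mul_nonneg hτ (hγ k)) (inv_nonneg.2 (by linarith [hγτ k])))
        (fun k => mul_nonneg hτ (hc k)) (by simpa [F] using hB) hstep (n + 1)
    _ = _ := by
      simp only [F, mul_sum, mul_assoc, range_zero, sum_empty, zero_add, add_comm B]

/-- Discrete Gronwall inequality (Heywood–Rannacher). -/
theorem discrete_gronwall (τ B : ℝ) (a b c γ : ℕ → ℝ)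
    (hτ : 0 ≤ τ) (hB : 0 ≤ B)
    (ha : ∀ k, 0 ≤ a k) (hb : ∀ k, 0 ≤ b k) (hc : ∀ k, 0 ≤ c k) (hγ : ∀ k, 0 ≤ γ k)
    (hγτ : ∀ k, τ * γ k < 1)
    (hrec : ∀ n : ℕ, a n + τ * ∑ k ∈ range (n + 1), b k ≤
      τ * ∑ k ∈ range (n + 1), γ k * a k + τ * ∑ k ∈ range (n + 1), c k + B) :
    ∀ n : ℕ, a n + τ * ∑ k ∈ range (n + 1), b k ≤
      Real.exp (τ * ∑ k ∈ range (n + 1), γ k * (1 - τ * γ k)⁻¹) *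
        (τ * ∑ k ∈ range (n + 1), c k + B) :=
  discrete_gronwall_general τ B a b c γ hτ hB hb hc hγ hγτ hrec
end Heywood
end

section
/- Sufficient boundary conditions for membership in Σ (smooth case): let Ω ⊂ ℝ^d be a bounded smooth domain and τ a C² symmetric matrix field on Ω̄. If the tangential part of τn vanishes on ∂Ω (i.e., (I − nnᵀ)(τn) = 0) and nᵀ Div τ = 0 on ∂Ω, then for every v ∈ H²(Ω) with ∂_n v = 0 on ∂Ω one has ∫_Ω (div Div τ) v dx = ∫_Ω τ : ∇²v dx. -/
open MeasureTheory Finset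

noncomputable section

def pder {d : ℕ} (f : EuclideanSpace ℝ (Fin d) → ℝ) (i : Fin d)
    (x : EuclideanSpace ℝ (Fin d)) : ℝ :=
  fderiv ℝ f x (EuclideanSpace.single i 1)

def hess {d : ℕ} (v : EuclideanSpace ℝ (Fin d) → ℝ) (x : EuclideanSpace ℝ (Fin d))
    (i j : Fin d) : ℝ :=
  pder (pder v j) i x

def MDiv {d : ℕ} (τ : EuclideanSpace ℝ (Fin d) → Matrix (Fin d) (Fin d) ℝ)
    (x : EuclideanSpace ℝ (Fin d)) (i : Fin d) : ℝ :=
  ∑ j, pder (fun y => τ y i j) j x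

def divDiv {d : ℕ} (τ : EuclideanSpace ℝ (Fin d) → Matrix (Fin d) (Fin d) ℝ)
    (x : EuclideanSpace ℝ (Fin d)) : ℝ :=
  ∑ i, pder (fun y => MDiv τ y i) i x

lemma pder_contDiff {d : ℕ} {f : EuclideanSpace ℝ (Fin d) → ℝ} {m n : WithTop ℕ∞}
    (hf : ContDiff ℝ n f) (h : m + 1 ≤ n) (i : Fin d) : ContDiff ℝ m (pder f i) :=
  (hf.fderiv_right h).clm_apply contDiff_const

lemma pder_mul {d : ℕ} {f g : EuclideanSpace ℝ (Fin d) → ℝ} {x : EuclideanSpace ℝ (Fin d)}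
    (hf : DifferentiableAt ℝ f x) (hg : DifferentiableAt ℝ g x) (i : Fin d) :
    pder (fun y => f y * g y) i x = pder f i x * g x + f x * pder g i x := by
  unfold pder
  rw [fderiv_fun_mul hf hg]
  simp only [ContinuousLinearMap.add_apply, ContinuousLinearMap.smul_apply, smul_eq_mul]
  ring

lemma pder_sum {d : ℕ} {ι : Type*} (s : Finset ι) {f : ι → EuclideanSpace ℝ (Fin d) → ℝ}
    {x : EuclideanSpace ℝ (Fin d)}
    (hf : ∀ j ∈ s, DifferentiableAt ℝ (f j) x) (i : Fin d) :
    pder (fun y => ∑ j ∈ s, f j y) i x = ∑ j ∈ s, pder (f j) i x := by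
  unfold pder
  rw [fderiv_fun_sum hf]
  simp

/-- Sufficient boundary conditions for membership in Σ (smooth case):
if the tangential part of τn vanishes and nᵀDiv τ = 0 on ∂Ω, then
∫_Ω (divDiv τ) v = ∫_Ω τ : ∇²v for every C² function v with ∂_n v = 0 on ∂Ω. -/
theorem sufficient_boundary_conditions {d : ℕ}
    (Ω : Set (EuclideanSpace ℝ (Fin d))) (hΩopen : IsOpen Ω)
    (hΩbdd : Bornology.IsBounded Ω)
    (μb : Measure (EuclideanSpace ℝ (Fin d)))
    (n : EuclideanSpace ℝ (Fin d) → Fin d → ℝ)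
    -- the surface measure is carried by the boundary ∂Ω:
    (hμb : ∀ g : EuclideanSpace ℝ (Fin d) → ℝ,
      (∀ x ∈ frontier Ω, g x = 0) → ∫ x, g x ∂μb = 0)
    -- divergence theorem for C¹ vector fields on Ω with outer normal n:
    (hdivthm : ∀ X : EuclideanSpace ℝ (Fin d) → Fin d → ℝ,
      (∀ i, ContDiff ℝ 1 (fun x => X x i)) →
      (∫ x in Ω, ∑ i, pder (fun y => X y i) i x) = ∫ x, (∑ i, X x i * n x i) ∂μb)
    (τ : EuclideanSpace ℝ (Fin d) → Matrix (Fin d) (Fin d) ℝ)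
    (hτ : ∀ i j, ContDiff ℝ 2 (fun x => τ x i j))
    (hτsym : ∀ x, (τ x).IsSymm)
    -- tangential part of τn vanishes on ∂Ω: (I − nnᵀ)(τn) = 0
    (hbc1 : ∀ x ∈ frontier Ω, ∀ i,
      (∑ j, τ x i j * n x j) - (∑ k, n x k * ∑ j, τ x k j * n x j) * n x i = 0)
    -- nᵀ Div τ = 0 on ∂Ω
    (hbc2 : ∀ x ∈ frontier Ω, ∑ i, n x i * MDiv τ x i = 0) :
    ∀ v : EuclideanSpace ℝ (Fin d) → ℝ, ContDiff ℝ 2 v →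
      (∀ x ∈ frontier Ω, ∑ i, pder v i x * n x i = 0) →
      ∫ x in Ω, divDiv τ x * v x = ∫ x in Ω, ∑ i, ∑ j, τ x i j * hess v x i j := by
  intro v hv hvn
  have hτ1 : ∀ i j k, ContDiff ℝ 1 (pder (fun y => τ y i j) k) := fun i j k =>
    pder_contDiff (hτ i j) (by norm_num) k
  have hMDiv : ∀ i, ContDiff ℝ 1 (fun x => MDiv τ x i) := by
    intro i
    unfold MDiv
    exact ContDiff.sum fun j _ => hτ1 i j j
  have hpv : ∀ i, ContDiff ℝ 1 (pder v i) := fun i =>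
    pder_contDiff hv (by norm_num) i
  have hv1 : ContDiff ℝ 1 v := hv.of_le (by norm_num)
  have hInt : ∀ f : EuclideanSpace ℝ (Fin d) → ℝ, Continuous f → IntegrableOn f Ω := by
    intro f hf
    exact (hf.continuousOn.integrableOn_compact hΩbdd.isCompact_closure).mono_set
      subset_closure
  have hcontA : Continuous (fun x => divDiv τ x * v x) := by
    have : Continuous (fun x => divDiv τ x) := by
      unfold divDiv
      exact continuous_finset_sum _ fun i _ =>
        (pder_contDiff (m := 0) (hMDiv i) (by norm_num) i).continuous
    exact this.mul hv.continuous
  have hcontB : Continuous (fun x => ∑ i, MDiv τ x i * pder v i x) :=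
    continuous_finset_sum _ fun i _ => ((hMDiv i).continuous.mul (hpv i).continuous)
  have hcontC : Continuous (fun x => ∑ i, ∑ j, τ x i j * hess v x i j) := by
    refine continuous_finset_sum _ fun i _ => continuous_finset_sum _ fun j _ => ?_
    exact ((hτ i j).continuous).mul
      (pder_contDiff (m := 0) (hpv j) (by norm_num) i).continuous
  -- Step 1: ∫_Ω (divDiv τ · v + ∑ MDiv·∂v) = 0
  have step1 : (∫ x in Ω, (divDiv τ x * v x + ∑ i, MDiv τ x i * pder v i x)) = 0 := by
    have hX1 : ∀ i, ContDiff ℝ 1 (fun x => MDiv τ x i * v x) := fun i => (hMDiv i).mul hv1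
    have hdiv : ∀ x : EuclideanSpace ℝ (Fin d),
        divDiv τ x * v x + ∑ i, MDiv τ x i * pder v i x
        = ∑ i, pder (fun y => MDiv τ y i * v y) i x := by
      intro x
      rw [divDiv, Finset.sum_mul, ← Finset.sum_add_distrib]
      refine Finset.sum_congr rfl fun i _ => ?_
      exact (pder_mul ((hMDiv i).differentiable one_ne_zero x)
        (hv1.differentiable one_ne_zero x) i).symm
    have e1 : (∫ x in Ω, (divDiv τ x * v x + ∑ i, MDiv τ x i * pder v i x))
        = ∫ x in Ω, ∑ i, pder (fun y => MDiv τ y i * v y) i x :=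
      setIntegral_congr_fun hΩopen.measurableSet fun x _ => hdiv x
    rw [e1, hdivthm (fun x i => MDiv τ x i * v x) hX1]
    apply hμb
    intro x hx
    have h2 := hbc2 x hx
    have : (∑ i, MDiv τ x i * v x * n x i) = v x * ∑ i, n x i * MDiv τ x i := by
      rw [Finset.mul_sum]
      exact Finset.sum_congr rfl fun i _ => by ring
    rw [this, h2, mul_zero]
  -- Step 2: ∫_Ω (∑ MDiv·∂v + τ:∇²v) = 0
  have step2 : (∫ x in Ω, ((∑ i, MDiv τ x i * pder v i x)
      + ∑ i, ∑ j, τ x i j * hess v x i j)) = 0 := by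
    have hX2 : ∀ j, ContDiff ℝ 1 (fun x => ∑ i, τ x i j * pder v i x) := fun j =>
      ContDiff.sum fun i _ => ((hτ i j).of_le (by norm_num)).mul (hpv i)
    have hdiv : ∀ x : EuclideanSpace ℝ (Fin d),
        (∑ i, MDiv τ x i * pder v i x) + (∑ i, ∑ j, τ x i j * hess v x i j)
        = ∑ j, pder (fun y => ∑ i, τ y i j * pder v i y) j x := by
      intro x
      have hterm : ∀ j, pder (fun y => ∑ i, τ y i j * pder v i y) j x
          = ∑ i, (pder (fun y => τ y i j) j x * pder v i x
              + τ x i j * pder (pder v i) j x) := by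
        intro j
        rw [pder_sum _ (fun i _ => (((hτ i j).of_le (by norm_num)).mul
          (hpv i)).differentiable one_ne_zero x) j]
        refine Finset.sum_congr rfl fun i _ => ?_
        exact pder_mul (((hτ i j).of_le (by norm_num : (1:WithTop ℕ∞) ≤ 2)).differentiable
          one_ne_zero x) ((hpv i).differentiable one_ne_zero x) j
      simp_rw [hterm, Finset.sum_add_distrib]
      congr 1
      · rw [Finset.sum_comm]
        refine Finset.sum_congr rfl fun i _ => ?_
        rw [MDiv, Finset.sum_mul]
      · show ∑ i, ∑ j, τ x i j * hess v x i j
            = ∑ i, ∑ j, τ x j i * pder (pder v j) i x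
        refine Finset.sum_congr rfl fun i _ => Finset.sum_congr rfl fun j _ => ?_
        rw [(hτsym x).apply i j]
        rfl
    have e1 : (∫ x in Ω, ((∑ i, MDiv τ x i * pder v i x)
        + ∑ i, ∑ j, τ x i j * hess v x i j))
        = ∫ x in Ω, ∑ j, pder (fun y => ∑ i, τ y i j * pder v i y) j x :=
      setIntegral_congr_fun hΩopen.measurableSet fun x _ => hdiv x
    rw [e1, hdivthm (fun x j => ∑ i, τ x i j * pder v i x) hX2]
    apply hμb
    intro x hx
    have h1 : ∀ i, ∑ j, τ x i j * n x j
        = (∑ k, n x k * ∑ j, τ x k j * n x j) * n x i :=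
      fun i => sub_eq_zero.mp (hbc1 x hx i)
    have e2 : ∑ j, (∑ i, τ x i j * pder v i x) * n x j
        = ∑ i, pder v i x * (∑ j, τ x i j * n x j) := by
      simp_rw [Finset.sum_mul, Finset.mul_sum]
      rw [Finset.sum_comm]
      exact Finset.sum_congr rfl fun i _ => Finset.sum_congr rfl fun j _ => by ring
    rw [e2, show (∑ i, pder v i x * (∑ j, τ x i j * n x j))
        = ∑ i, pder v i x * ((∑ k, n x k * ∑ j, τ x k j * n x j) * n x i) from
      Finset.sum_congr rfl fun i _ => by rw [h1 i]]
    have e3 : ∑ i, pder v i x * ((∑ k, n x k * ∑ j, τ x k j * n x j) * n x i)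
        = (∑ k, n x k * ∑ j, τ x k j * n x j) * ∑ i, pder v i x * n x i := by
      rw [Finset.mul_sum]
      exact Finset.sum_congr rfl fun i _ => by ring
    rw [e3, hvn x hx, mul_zero]
  -- combine
  have iA := hInt _ hcontA
  have iB := hInt _ hcontB
  have iC := hInt _ hcontC
  rw [integral_add iA iB] at step1
  rw [integral_add iB iC] at step2
  linarith

end
end
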